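/- arXiv:1702.02592 — 2 statements merged into one kernel-verified Lean document; each statement's English description precedes it below -/
import Mathlib

section
/- Under the standing construction, assume additionally that X is a real Hilbert space, {v_n}_{n≥1} is orthonormal, and t₁ + t₂ > 1. For n ≥ 2 let τ_n ∈ [(t_{n−1}+t_n)/2, t_n) be a point at which z_n′ attains its maximum (so z_n′(τ_n) > 0), and let w(t) := Σ_{n=1}^∞ χ_{[t_n,1)}(t) · (1/Γ(1−α)) (∫_0^t (t−s)^{−α} z_{n+1}′(s) ds) v_{n+1}. Then the sequence {‖w(τ_n)‖}_{n≥2} is unbounded; equivalently, there exists a subsequence {τ_{n_l}} with lim_{l→∞} ‖w(τ_{n_l})‖ = ∞. -/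
/-!
For `n ≥ 3` the point `τ_n` lies in `(t_{n-1}, t_n)`, where only the terms `k ≤ n - 1` of the
series defining `w` survive, so by orthonormality `‖w(τ_n)‖` dominates the coefficient of
`v_{n-1}`. On `[0, τ_n]` the derivative `z_{n-1}′` is a nonnegative bump of mass `1` supported in
`[(t_{n-2}+t_{n-1})/2, t_{n-1}]`, and the kernel `(τ_n - s)^{-α}` is at least
`(t_n - t_{n-2})^{-α}` there. Hence `‖w(τ_n)‖ ≥ (t_n - t_{n-2})^{-α} / Γ(1-α) → ∞`.
-/

open Set Filter MeasureTheory Topology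

theorem Orthonormal.abs_coeff_le_norm_tsum_smul {ι E : Type*} [NormedAddCommGroup E]
    [InnerProductSpace ℝ E] {e : ι → E} (he : Orthonormal ℝ e) {c : ι → ℝ} (s : Finset ι)
    (hc : ∀ i ∉ s, c i = 0) {i : ι} (hi : i ∈ s) : |c i| ≤ ‖∑' j, c j • e j‖ := by
  rw [tsum_eq_sum (s := s) fun j hj => by rw [hc j hj, zero_smul]]
  calc |c i| = |inner ℝ (∑ j ∈ s, c j • e j) (e i)| := by
        rw [he.inner_left_sum c hi]; rfl
    _ ≤ ‖∑ j ∈ s, c j • e j‖ * ‖e i‖ := abs_real_inner_le_norm _ _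
    _ = ‖∑ j ∈ s, c j • e j‖ := by rw [he.1 i, mul_one]

theorem Orthonormal.le_norm_tsum_indicator_Ico_smul {E : Type*} [NormedAddCommGroup E]
    [InnerProductSpace ℝ E] {e : ℕ → E} (he : Orthonormal ℝ e) {t : ℕ → ℝ} (ht : Monotone t)
    (F : ℕ → ℝ → ℝ) {s : ℝ} {p N : ℕ} (hs : s ∈ Ico (t p) 1) (hN : s < t N) :
    F p s ≤ ‖∑' n, (Ico (t n) 1).indicator (F n) s • e n‖ := by
  have hpN : p < N := lt_of_not_ge fun h => (hs.1.trans_lt hN).not_ge (ht h)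
  refine le_trans ?_ ((le_abs_self _).trans
    (he.abs_coeff_le_norm_tsum_smul (Finset.range N)
      (fun n hn => indicator_of_notMem (fun h => ?_) _) (Finset.mem_range.2 hpN)))
  · rw [indicator_of_mem hs]
  · exact (hN.trans_le (ht (not_lt.1 (Finset.mem_range.not.1 hn)))).not_ge h.1

theorem deriv_eq_zero_of_eqOn_Icc {f : ℝ → ℝ} {a b c x : ℝ} (hab : a < b)
    (hf : EqOn f (fun _ => c) (Icc a b)) (hx : x ∈ Icc a b) (hd : DifferentiableAt ℝ f x) :
    deriv f x = 0 := by
  rw [← hd.derivWithin (uniqueDiffOn_Icc hab x hx), derivWithin_congr hf (hf hx)]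
  simp

theorem rpow_neg_le_integral_rpow_neg_mul {α m b τ : ℝ} {g : ℝ → ℝ} (hα : 0 ≤ α)
    (hm : 0 ≤ m) (hmb : m ≤ b) (hbτ : b < τ) (hg : ContinuousOn g (Icc m b))
    (hg_nonneg : ∀ σ ∈ Icc m b, 0 ≤ g σ) (hg_left : EqOn g 0 (Icc 0 m))
    (hg_right : EqOn g 0 (Icc b τ)) (hg_mass : ∫ σ in m..b, g σ = 1) :
    (τ - m) ^ (-α) ≤ ∫ σ in 0..τ, (τ - σ) ^ (-α) * g σ := by
  set f : ℝ → ℝ := fun σ => (τ - σ) ^ (-α) * g σ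
  have hf_left : EqOn f 0 (uIcc 0 m) := by
    rw [uIcc_of_le hm]; intro σ hσ; simp [f, hg_left hσ]
  have hf_right : EqOn f 0 (uIcc b τ) := by
    rw [uIcc_of_le hbτ.le]; intro σ hσ; simp [f, hg_right hσ]
  have hf_mid : IntervalIntegrable f volume m b := by
    refine ContinuousOn.intervalIntegrable ?_
    rw [uIcc_of_le hmb]
    refine ((continuousOn_const.sub continuousOn_id).rpow_const fun σ hσ => ?_).mul hg
    exact Or.inl (sub_ne_zero.2 (hσ.2.trans_lt hbτ).ne')
  have hf_left_int : IntervalIntegrable f volume 0 m :=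
    (continuousOn_const.congr hf_left).intervalIntegrable
  have hf_right_int : IntervalIntegrable f volume b τ :=
    (continuousOn_const.congr hf_right).intervalIntegrable
  calc (τ - m) ^ (-α) = ∫ σ in m..b, (τ - m) ^ (-α) * g σ := by
        rw [intervalIntegral.integral_const_mul, hg_mass, mul_one]
    _ ≤ ∫ σ in m..b, f σ := by
        refine intervalIntegral.integral_mono_on hmb
          ((hg.intervalIntegrable_of_Icc hmb).const_mul _) hf_mid fun σ hσ => ?_
        exact mul_le_mul_of_nonneg_right (Real.rpow_le_rpow_of_nonpos
          (by linarith [hσ.2]) (by linarith [hσ.1]) (by linarith)) (hg_nonneg σ hσ)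
    _ = ∫ σ in 0..τ, f σ := by
        rw [← intervalIntegral.integral_add_adjacent_intervals (hf_left_int.trans hf_mid)
            hf_right_int, ← intervalIntegral.integral_add_adjacent_intervals hf_left_int hf_mid,
          intervalIntegral.integral_congr hf_left,
          intervalIntegral.integral_congr hf_right]
        simp

theorem rpow_neg_le_integral_rpow_neg_mul_deriv {α a b c e τ : ℝ} {z : ℝ → ℝ} (hα : 0 ≤ α)
    (ha : 0 < a) (hab : a < b) (hz : ContDiff ℝ 1 z)
    (hz_zero : ∀ s, s ∉ Ioo ((a + b) / 2) e → z s = 0) (hz_one : ∀ s ∈ Icc b c, z s = 1)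
    (hz_deriv_nonneg : ∀ s ∈ Icc ((a + b) / 2) b, 0 ≤ deriv z s)
    (hτ : τ ∈ Ico ((b + c) / 2) c) :
    (c - a) ^ (-α) ≤ ∫ σ in 0..τ, (τ - σ) ^ (-α) * deriv z σ := by
  obtain ⟨hτ_lo, hτ_hi⟩ := hτ
  have hm : 0 < (a + b) / 2 := by linarith
  have hmb : (a + b) / 2 < b := by linarith
  have hbτ : b < τ := by linarith
  have hdiff : Differentiable ℝ z := hz.differentiable one_ne_zero
  have hcont : Continuous (deriv z) := hz.continuous_deriv le_rfl
  have hz_left : EqOn z (fun _ => 0) (Icc 0 ((a + b) / 2)) :=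
    fun s hs => hz_zero s fun h => h.1.not_ge hs.2
  have hz_right : EqOn z (fun _ => 1) (Icc b τ) :=
    fun s hs => hz_one s ⟨hs.1, hs.2.trans hτ_hi.le⟩
  have hmass : ∫ σ in (a + b) / 2..b, deriv z σ = 1 := by
    rw [intervalIntegral.integral_deriv_eq_sub (fun σ _ => hdiff σ)
      (hcont.intervalIntegrable _ _), hz_right ⟨le_rfl, hbτ.le⟩, hz_left ⟨hm.le, le_rfl⟩,
      sub_zero]
  calc (c - a) ^ (-α) ≤ (τ - (a + b) / 2) ^ (-α) :=
        Real.rpow_le_rpow_of_nonpos (by linarith) (by linarith) (by linarith)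
    _ ≤ ∫ σ in 0..τ, (τ - σ) ^ (-α) * deriv z σ :=
        rpow_neg_le_integral_rpow_neg_mul hα hm.le hmb.le hbτ hcont.continuousOn
          hz_deriv_nonneg
          (fun σ hσ => deriv_eq_zero_of_eqOn_Icc hm hz_left hσ (hdiff σ))
          (fun σ hσ => deriv_eq_zero_of_eqOn_Icc hbτ hz_right hσ (hdiff σ)) hmass

theorem tendsto_sub_rpow_neg_atTop {u : ℕ → ℝ} {L α : ℝ} (hα : 0 < α) (hu : StrictMono u)
    (hL : Tendsto u atTop (𝓝 L)) {k : ℕ} (hk : 0 < k) :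
    Tendsto (fun p => (u (p + k) - u p) ^ (-α)) atTop atTop := by
  have hgap : Tendsto (fun p => u (p + k) - u p) atTop (𝓝[>] 0) := by
    refine tendsto_nhdsWithin_iff.2 ⟨?_, .of_forall fun p => sub_pos.2 (hu (by omega))⟩
    simpa using (hL.comp (tendsto_add_atTop_nat k)).sub hL
  exact (tendsto_rpow_neg_nhdsGT_zero (neg_neg_of_pos hα)).comp hgap

theorem property_P_holds_in_Hilbert_spaces_general
    (α : ℝ) (hα : α ∈ Set.Ioo (0 : ℝ) 1)
    (X : Type*) [NormedAddCommGroup X] [InnerProductSpace ℝ X]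
    (t : ℕ → ℝ) (z : ℕ → ℝ → ℝ) (v : ℕ → X) (τ : ℕ → ℝ)
    (ht_mem : ∀ n, 1 ≤ n → t n ∈ Set.Ioo (0 : ℝ) 1)
    (ht_mono : ∀ n, 1 ≤ n → t n < t (n + 1))
    (ht_lim : Filter.Tendsto t Filter.atTop (nhds 1))
    (hz_smooth : ∀ n, 2 ≤ n → ContDiff ℝ 1 (z n))
    (hz_one : ∀ n, 2 ≤ n → ∀ s ∈ Set.Icc (t n) (t (n + 1)), z n s = 1)
    (hz_zero : ∀ n, 2 ≤ n → ∀ s : ℝ,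
      s ∉ Set.Ioo ((t (n - 1) + t n) / 2) ((t (n + 1) + t (n + 2)) / 2) → z n s = 0)
    (hz_deriv_nonneg : ∀ n, 2 ≤ n →
      ∀ s ∈ Set.Icc ((t (n - 1) + t n) / 2) (t n), 0 ≤ deriv (z n) s)
    -- {v_n}_{n ≥ 1} is orthonormal
    (hv_orth : ∀ n m, 1 ≤ n → 1 ≤ m →
      (inner ℝ (v n) (v m) : ℝ) = if n = m then 1 else 0)
    -- τ_n is a maximum point of z_n′ in [(t_{n-1}+t_n)/2, t_n), and z_n′(τ_n) > 0
    (hτ_mem : ∀ n, 2 ≤ n → τ n ∈ Set.Ico ((t (n - 1) + t n) / 2) (t n)) :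
    ∀ w : ℝ → X,
      (∀ s : ℝ, w s = ∑' n : ℕ,
        Set.indicator (Set.Ico (t (n + 1)) 1)
          (fun r : ℝ => (1 / Real.Gamma (1 - α)) *
            ∫ σ in (0 : ℝ)..r, ((r - σ) ^ (-α)) * deriv (z (n + 2)) σ) s • v (n + 2)) →
      -- the sequence {‖w(τ_n)‖}_{n ≥ 2} is unbounded
      (¬ ∃ M : ℝ, ∀ n, 2 ≤ n → ‖w (τ n)‖ ≤ M) ∧
      -- equivalently, there is a subsequence with ‖w(τ_{n_l})‖ → ∞
      (∃ φ : ℕ → ℕ, StrictMono φ ∧ (∀ l, 2 ≤ φ l) ∧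
        Filter.Tendsto (fun l => ‖w (τ (φ l))‖) Filter.atTop Filter.atTop) := by
  intro w hw
  have hΓ : 0 < Real.Gamma (1 - α) := Real.Gamma_pos_of_pos (by linarith [hα.2])
  have ht_strict : StrictMono fun n => t (n + 1) :=
    strictMono_nat_of_lt_succ fun n => ht_mono (n + 1) (by omega)
  have hv : Orthonormal ℝ fun n => v (n + 2) := orthonormal_iff_ite.2 fun i j => by
    simpa using hv_orth (i + 2) (j + 2) (by omega) (by omega)
  have key : ∀ p : ℕ,
      1 / Real.Gamma (1 - α) * (t (p + 3) - t (p + 1)) ^ (-α) ≤ ‖w (τ (p + 3))‖ := by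
    intro p
    have hτ : τ (p + 3) ∈ Ico ((t (p + 2) + t (p + 3)) / 2) (t (p + 3)) :=
      hτ_mem (p + 3) (by omega)
    have h₁₂ : t (p + 1) < t (p + 2) := ht_mono (p + 1) (by omega)
    rw [hw]
    refine le_trans ?_ (hv.le_norm_tsum_indicator_Ico_smul (t := fun n => t (n + 1))
      ht_strict.monotone _ (p := p) (N := p + 2)
      ⟨by linarith [hτ.1, hτ.2], hτ.2.trans (ht_mem (p + 3) (by omega)).2⟩ hτ.2)
    refine mul_le_mul_of_nonneg_left ?_ (by positivity)
    exact rpow_neg_le_integral_rpow_neg_mul_deriv hα.1.le (ht_mem (p + 1) (by omega)).1 h₁₂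
      (hz_smooth (p + 2) (by omega)) (hz_zero (p + 2) (by omega)) (hz_one (p + 2) (by omega))
      (hz_deriv_nonneg (p + 2) (by omega)) hτ
  have hlow : Tendsto (fun p : ℕ => 1 / Real.Gamma (1 - α) * (t (p + 3) - t (p + 1)) ^ (-α))
      atTop atTop :=
    (tendsto_sub_rpow_neg_atTop hα.1 ht_strict (ht_lim.comp (tendsto_add_atTop_nat 1))
      two_pos).const_mul_atTop (by positivity)
  refine ⟨fun ⟨M, hM⟩ => ?_, (· + 3), fun _ _ h => Nat.add_lt_add_right h 3,
    fun l => show 2 ≤ l + 3 by omega, tendsto_atTop_mono key hlow⟩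
  obtain ⟨p, hp⟩ := (hlow.eventually_gt_atTop M).exists
  exact (key p).not_gt ((hM (p + 3) (by omega)).trans_lt hp)

/-- In a Hilbert space, with `{v_n}` orthonormal and `t₁ + t₂ > 1`, the values of the
Caputo derivative `w` at the maximum points `τ_n` of `z_n′` form an unbounded sequence;
equivalently there is a subsequence along which `‖w(τ_{n_l})‖ → ∞` (property (P)). -/
theorem property_P_holds_in_Hilbert_spaces
    (α : ℝ) (hα : α ∈ Set.Ioo (0 : ℝ) 1)
    (X : Type*) [NormedAddCommGroup X] [InnerProductSpace ℝ X] [CompleteSpace X]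
    (t : ℕ → ℝ) (z : ℕ → ℝ → ℝ) (v : ℕ → X) (τ : ℕ → ℝ)
    (ht_mem : ∀ n, 1 ≤ n → t n ∈ Set.Ioo (0 : ℝ) 1)
    (ht_mono : ∀ n, 1 ≤ n → t n < t (n + 1))
    (ht_lim : Filter.Tendsto t Filter.atTop (nhds 1))
    (ht_step : ∀ n, 2 ≤ n → t (n + 1) - t n < t n - t (n - 1))
    (ht_sum : 1 < t 1 + t 2)
    (hz1 : ∀ s : ℝ, z 1 s = 1)
    (hz_smooth : ∀ n, 2 ≤ n → ContDiff ℝ 1 (z n))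
    (hz_one : ∀ n, 2 ≤ n → ∀ s ∈ Set.Icc (t n) (t (n + 1)), z n s = 1)
    (hz_mid : ∀ n, 2 ≤ n → ∀ s ∈ Set.Ioo ((t (n - 1) + t n) / 2) (t n) ∪
        Set.Ioo (t (n + 1)) ((t (n + 1) + t (n + 2)) / 2),
      0 < z n s ∧ z n s < 1)
    (hz_zero : ∀ n, 2 ≤ n → ∀ s : ℝ,
      s ∉ Set.Ioo ((t (n - 1) + t n) / 2) ((t (n + 1) + t (n + 2)) / 2) → z n s = 0)
    (hz_deriv_nonneg : ∀ n, 2 ≤ n →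
      ∀ s ∈ Set.Icc ((t (n - 1) + t n) / 2) (t n), 0 ≤ deriv (z n) s)
    (hz_deriv_nonpos : ∀ n, 2 ≤ n →
      ∀ s ∈ Set.Icc (t (n + 1)) ((t (n + 1) + t (n + 2)) / 2), deriv (z n) s ≤ 0)
    -- {v_n}_{n ≥ 1} is orthonormal
    (hv_orth : ∀ n m, 1 ≤ n → 1 ≤ m →
      (inner ℝ (v n) (v m) : ℝ) = if n = m then 1 else 0)
    -- τ_n is a maximum point of z_n′ in [(t_{n-1}+t_n)/2, t_n), and z_n′(τ_n) > 0
    (hτ_mem : ∀ n, 2 ≤ n → τ n ∈ Set.Ico ((t (n - 1) + t n) / 2) (t n))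
    (hτ_max : ∀ n, 2 ≤ n → ∀ s : ℝ, deriv (z n) s ≤ deriv (z n) (τ n))
    (hτ_pos : ∀ n, 2 ≤ n → 0 < deriv (z n) (τ n)) :
    ∀ w : ℝ → X,
      (∀ s : ℝ, w s = ∑' n : ℕ,
        Set.indicator (Set.Ico (t (n + 1)) 1)
          (fun r : ℝ => (1 / Real.Gamma (1 - α)) *
            ∫ σ in (0 : ℝ)..r, ((r - σ) ^ (-α)) * deriv (z (n + 2)) σ) s • v (n + 2)) →
      -- the sequence {‖w(τ_n)‖}_{n ≥ 2} is unbounded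
      (¬ ∃ M : ℝ, ∀ n, 2 ≤ n → ‖w (τ n)‖ ≤ M) ∧
      -- equivalently, there is a subsequence with ‖w(τ_{n_l})‖ → ∞
      (∃ φ : ℕ → ℕ, StrictMono φ ∧ (∀ l, 2 ≤ φ l) ∧
        Filter.Tendsto (fun l => ‖w (τ (φ l))‖) Filter.atTop Filter.atTop) :=
  property_P_holds_in_Hilbert_spaces_general α hα X t z v τ ht_mem ht_mono ht_lim hz_smooth hz_one
    hz_zero hz_deriv_nonneg hv_orth hτ_mem
end

section
/- Under the standing construction with biorthogonal functionals, let w, H, φ and f_α(t,x) := φ(H(t,x)) w(t) be as in the construction, and assume hypothesis (P): there is a subsequence {τ_{n_l}}_{l≥1} of the maximum points τ_n ∈ [(t_{n−1}+t_n)/2, t_n) of z_n′ with lim_{l→∞} ‖w(τ_{n_l})‖ = ∞. Set s_l := τ_{n_l} and y_l := Σ_{k=1}^{l+1} k^{−2} v_k. Then the sequence {(s_l, y_l)}_{l≥1} is bounded in [0,1) × X, φ(H(s_l, y_l)) = 1 for every l, and ‖f_α(s_l, y_l)‖ = ‖w(s_l)‖ → ∞ as l → ∞; in particular f_α maps a bounded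 subset of [0,1) × X onto an unbounded subset of X. -/
open Set Filter MeasureTheory

/-- Under the standing construction with biorthogonal functionals and hypothesis (P),
setting `s_l := τ_{n_l}` and `y_l := Σ_{k=1}^{l+1} k⁻² v_k`, the sequence `{(s_l,y_l)}`
is bounded in `[0,1) × X`, `φ(H(s_l,y_l)) = 1`, and `‖f_α(s_l,y_l)‖ = ‖w(s_l)‖ → ∞`;
in particular `f_α` maps a bounded subset of `[0,1) × X` onto an unbounded set. -/
theorem f_alpha_unbounded_on_bounded_set
    (α : ℝ) (hα : α ∈ Set.Ioo (0 : ℝ) 1)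
    (X : Type*) [NormedAddCommGroup X] [NormedSpace ℝ X] [CompleteSpace X]
    (t : ℕ → ℝ) (z : ℕ → ℝ → ℝ) (v : ℕ → X) (V : ℕ → X →L[ℝ] ℝ) (τ : ℕ → ℝ)
    (ht_mem : ∀ n, 1 ≤ n → t n ∈ Set.Ioo (0 : ℝ) 1)
    (ht_mono : ∀ n, 1 ≤ n → t n < t (n + 1))
    (ht_lim : Filter.Tendsto t Filter.atTop (nhds 1))
    (ht_step : ∀ n, 2 ≤ n → t (n + 1) - t n < t n - t (n - 1))
    (hz1 : ∀ s : ℝ, z 1 s = 1)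
    (hz_smooth : ∀ n, 2 ≤ n → ContDiff ℝ 1 (z n))
    (hz_one : ∀ n, 2 ≤ n → ∀ s ∈ Set.Icc (t n) (t (n + 1)), z n s = 1)
    (hz_mid : ∀ n, 2 ≤ n → ∀ s ∈ Set.Ioo ((t (n - 1) + t n) / 2) (t n) ∪
        Set.Ioo (t (n + 1)) ((t (n + 1) + t (n + 2)) / 2),
      0 < z n s ∧ z n s < 1)
    (hz_zero : ∀ n, 2 ≤ n → ∀ s : ℝ,
      s ∉ Set.Ioo ((t (n - 1) + t n) / 2) ((t (n + 1) + t (n + 2)) / 2) → z n s = 0)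
    (hz_deriv_nonneg : ∀ n, 2 ≤ n →
      ∀ s ∈ Set.Icc ((t (n - 1) + t n) / 2) (t n), 0 ≤ deriv (z n) s)
    (hz_deriv_nonpos : ∀ n, 2 ≤ n →
      ∀ s ∈ Set.Icc (t (n + 1)) ((t (n + 1) + t (n + 2)) / 2), deriv (z n) s ≤ 0)
    (hv : ∀ n, 1 ≤ n → ‖v n‖ = 1)
    (hV_norm : ∀ n, 1 ≤ n → ‖V n‖ ≤ 1)
    (hV_biorth : ∀ n m, 1 ≤ n → 1 ≤ m → V n (v m) = if n = m then 1 else 0)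
    -- τ_n is a maximum point of z_n′ in [(t_{n-1}+t_n)/2, t_n)
    (hτ_mem : ∀ n, 2 ≤ n → τ n ∈ Set.Ico ((t (n - 1) + t n) / 2) (t n))
    (hτ_max : ∀ n, 2 ≤ n → ∀ s : ℝ, deriv (z n) s ≤ deriv (z n) (τ n))
    -- the subsequence n_l from hypothesis (P)
    (nseq : ℕ → ℕ) (hnseq_mono : StrictMono nseq) (hnseq_ge : ∀ l, 2 ≤ nseq l) :
    ∀ (w : ℝ → X) (H : ℝ → X → ℝ) (f : ℝ → X → X) (y : ℕ → X),
      (∀ s : ℝ, w s = ∑' n : ℕ,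
        Set.indicator (Set.Ico (t (n + 1)) 1)
          (fun r : ℝ => (1 / Real.Gamma (1 - α)) *
            ∫ σ in (0 : ℝ)..r, ((r - σ) ^ (-α)) * deriv (z (n + 2)) σ) s • v (n + 2)) →
      (∀ (s : ℝ) (x : X), H s x =
        V 1 x * Set.indicator (Set.Ico (0 : ℝ) (t 1)) (fun _ => (1 : ℝ)) s +
        ∑' i : ℕ,
          ((1 / ((i : ℝ) + 1) ^ 2) * V (i + 1) x *
              Set.indicator (Set.Ici (t (i + 1))) (fun _ => (1 : ℝ)) s +
            (1 / ((i : ℝ) + 2) ^ 2) * V (i + 2) x *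
              ((s - t (i + 1)) / (t (i + 2) - t (i + 1))) *
              Set.indicator (Set.Ico (t (i + 1)) (t (i + 2))) (fun _ => (1 : ℝ)) s)) →
      (∀ (s : ℝ) (x : X), f s x = (min (H s x + 1) 1) • w s) →
      (∀ l : ℕ, y l = ∑ k ∈ Finset.range (l + 1),
        (1 / ((k : ℝ) + 1) ^ 2) • v (k + 1)) →
      -- hypothesis (P): along the subsequence, ‖w(τ_{n_l})‖ → ∞
      Filter.Tendsto (fun l => ‖w (τ (nseq l))‖) Filter.atTop Filter.atTop →
      -- the sequence {(s_l, y_l)} is bounded in [0,1) × X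
      (∀ l : ℕ, τ (nseq l) ∈ Set.Ico (0 : ℝ) 1) ∧
      (∃ C : ℝ, ∀ l : ℕ, ‖y l‖ ≤ C) ∧
      -- φ(H(s_l, y_l)) = 1 for every l
      (∀ l : ℕ, min (H (τ (nseq l)) (y l) + 1) 1 = 1) ∧
      -- ‖f_α(s_l, y_l)‖ = ‖w(s_l)‖ → ∞
      (∀ l : ℕ, ‖f (τ (nseq l)) (y l)‖ = ‖w (τ (nseq l))‖) ∧
      Filter.Tendsto (fun l => ‖f (τ (nseq l)) (y l)‖) Filter.atTop Filter.atTop ∧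
      -- f_α maps a bounded subset of [0,1) × X onto an unbounded set
      (∃ S : Set (ℝ × X), S ⊆ Set.Ico 0 1 ×ˢ Set.univ ∧ Bornology.IsBounded S ∧
        ¬ Bornology.IsBounded ((fun p : ℝ × X => f p.1 p.2) '' S)) := by
  intro w H f y hw hH hf hy htend
  -- summability of 1/(k+1)^2
  have hsum : Summable (fun k : ℕ => 1 / ((k : ℝ) + 1) ^ 2) := by
    have h2 : Summable (fun n : ℕ => 1 / (n : ℝ) ^ 2) :=
      Real.summable_one_div_nat_pow.mpr one_lt_two
    have h3 := (summable_nat_add_iff 1).mpr h2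
    simpa using h3
  -- biorthogonality gives nonnegativity of V j (y l)
  have hVy : ∀ (l j : ℕ), 1 ≤ j → 0 ≤ V j (y l) := by
    intro l j hj
    rw [hy l, map_sum]
    refine Finset.sum_nonneg fun k _ => ?_
    rw [_root_.map_smul, hV_biorth j (k + 1) hj (Nat.le_add_left 1 k)]
    split_ifs <;> simp <;> positivity
  -- H is nonnegative at (s, y l)
  have hHnn : ∀ (l : ℕ) (s : ℝ), 0 ≤ H s (y l) := by
    intro l s
    rw [hH]
    refine add_nonneg (mul_nonneg (hVy l 1 le_rfl)
      (Set.indicator_nonneg (fun _ _ => zero_le_one) s)) (tsum_nonneg fun i => ?_)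
    refine add_nonneg ?_ ?_
    · exact mul_nonneg (mul_nonneg (by positivity) (hVy l (i + 1) (Nat.le_add_left 1 i)))
        (Set.indicator_nonneg (fun _ _ => zero_le_one) s)
    · by_cases hs : s ∈ Set.Ico (t (i + 1)) (t (i + 2))
      · have hd : t (i + 1) < t (i + 2) := ht_mono (i + 1) (Nat.le_add_left 1 i)
        have hs1 := hs.1
        simp only [Set.indicator_of_mem hs, mul_one]
        refine mul_nonneg (mul_nonneg (by positivity)
          (hVy l (i + 2) (by omega))) (div_nonneg (by linarith) (by linarith))
      · rw [Set.indicator_of_notMem hs, mul_zero]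
  -- τ (nseq l) ∈ [0,1)
  have hτIco : ∀ l : ℕ, τ (nseq l) ∈ Set.Ico (0 : ℝ) 1 := by
    intro l
    have h2 : 2 ≤ nseq l := hnseq_ge l
    have hm := hτ_mem (nseq l) h2
    have ha := ht_mem (nseq l - 1) (by omega)
    have hb := ht_mem (nseq l) (by omega)
    refine ⟨?_, hm.2.trans hb.2⟩
    have := hm.1
    linarith [ha.1, hb.1]
  -- bound on y l
  have hyb : ∀ l : ℕ, ‖y l‖ ≤ ∑' k : ℕ, 1 / ((k : ℝ) + 1) ^ 2 := by
    intro l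
    rw [hy l]
    calc ‖∑ k ∈ Finset.range (l + 1), (1 / ((k : ℝ) + 1) ^ 2) • v (k + 1)‖
        ≤ ∑ k ∈ Finset.range (l + 1), ‖(1 / ((k : ℝ) + 1) ^ 2) • v (k + 1)‖ :=
          norm_sum_le _ _
      _ = ∑ k ∈ Finset.range (l + 1), 1 / ((k : ℝ) + 1) ^ 2 := by
          refine Finset.sum_congr rfl fun k _ => ?_
          rw [norm_smul, hv (k + 1) (Nat.le_add_left 1 k), mul_one, Real.norm_eq_abs,
            abs_of_nonneg (by positivity)]
      _ ≤ ∑' k : ℕ, 1 / ((k : ℝ) + 1) ^ 2 :=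
          Summable.sum_le_tsum _ (fun k _ => by positivity) hsum
  have hmin : ∀ l : ℕ, min (H (τ (nseq l)) (y l) + 1) 1 = 1 :=
    fun l => min_eq_right (by linarith [hHnn l (τ (nseq l))])
  have hfw : ∀ l : ℕ, ‖f (τ (nseq l)) (y l)‖ = ‖w (τ (nseq l))‖ := by
    intro l; rw [hf, hmin l, one_smul]
  have htend' : Filter.Tendsto (fun l => ‖f (τ (nseq l)) (y l)‖) Filter.atTop Filter.atTop := by
    have he : (fun l => ‖f (τ (nseq l)) (y l)‖) = fun l => ‖w (τ (nseq l))‖ := funext hfw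
    rw [he]; exact htend
  refine ⟨hτIco, ⟨_, hyb⟩, hmin, hfw, htend', ?_⟩
  refine ⟨Set.range (fun l : ℕ => (τ (nseq l), y l)), ?_, ?_, ?_⟩
  · rintro p ⟨l, rfl⟩
    exact Set.mk_mem_prod (hτIco l) (Set.mem_univ _)
  · refine Bornology.IsBounded.subset
      ((Metric.isBounded_Icc (0 : ℝ) 1).prod
        (Metric.isBounded_closedBall (x := (0 : X))
          (r := ∑' k : ℕ, 1 / ((k : ℝ) + 1) ^ 2))) ?_
    rintro p ⟨l, rfl⟩
    refine Set.mk_mem_prod ⟨(hτIco l).1, (hτIco l).2.le⟩ ?_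
    simpa [Metric.mem_closedBall, dist_eq_norm] using hyb l
  · intro hb
    obtain ⟨R, hR⟩ := isBounded_iff_forall_norm_le.mp hb
    obtain ⟨l, hl⟩ := (htend'.eventually_ge_atTop (R + 1)).exists
    have hmem : f (τ (nseq l)) (y l) ∈
        (fun p : ℝ × X => f p.1 p.2) '' Set.range (fun l : ℕ => (τ (nseq l), y l)) :=
      ⟨(τ (nseq l), y l), ⟨l, rfl⟩, rfl⟩
    have := hR _ hmem
    linarith
end
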